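/- arXiv:2303.06839 — 2 statements merged into one kernel-verified Lean document; each statement's English description precedes it below -/
import Mathlib

section
/- Let G be a skewing function and X the symmetric truncation of G to (-ℓ, ℓ) with ℓ > 0 and 2G(ℓ) > 1. Define C(ℓ) = (2/ℓ²)∫_0^ℓ y G(y) dy. Then Var(X) = ℓ² H(ℓ), where H(ℓ) = 1 - (2C(ℓ) - 1)/(2G(ℓ) - 1). -/
/-!
Integrating `g(t) 1{t < x}` over `t ∈ (-ℓ, ℓ]` and `x ~ μ` in both orders (Fubini) gives
`E[∫_{-ℓ}^X g] = ∫_{-ℓ}^ℓ g(t) P(X > t) dt`, and on `[-ℓ, ℓ]` the tail is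
`P(X > t) = (G(ℓ) - G(t)) / (2G(ℓ) - 1)`. Taking `g = 1` and `g(t) = t` turns the first two
moments into integrals of `G(ℓ) - G(t)` and `t (G(ℓ) - G(t))` over `[-ℓ, ℓ]`; skewness says
`G - 1/2` is odd, so both fold onto `[0, ℓ]`: the mean vanishes and
`E[X²] = ℓ² + (ℓ² - 4 ∫_0^ℓ t G(t) dt) / (2G(ℓ) - 1)`.
-/

open MeasureTheory Set Filter

theorem Continuous.integrable_of_ae_mem_isCompact {X E : Type*} [TopologicalSpace X]
    [T2Space X] [MeasurableSpace X] [OpensMeasurableSpace X] [NormedAddCommGroup E]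
    {μ : Measure X} [IsFiniteMeasure μ] {K : Set X} (hK : IsCompact K) (hμ : ∀ᵐ x ∂μ, x ∈ K)
    {f : X → E} (hf : Continuous f) : Integrable f μ := by
  rw [← Measure.restrict_eq_self_of_ae_mem hμ]
  exact hf.continuousOn.integrableOn_compact hK

theorem integral_intervalIntegral_eq_intervalIntegral_mul_measureReal_Ioi
    (μ : Measure ℝ) [IsFiniteMeasure μ] {a b : ℝ} (hab : a ≤ b)
    (hμ : ∀ᵐ x ∂μ, x ∈ Icc a b) {g : ℝ → ℝ} (hg : IntegrableOn g (Ioc a b)) :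
    ∫ x, (∫ t in a..x, g t) ∂μ = ∫ t in a..b, g t * μ.real (Ioi t) := by
  have hF : Integrable (Function.uncurry fun x t => (Iio x).indicator g t)
      (μ.prod (volume.restrict (Ioc a b))) := by
    have hlt : MeasurableSet {p : ℝ × ℝ | p.2 < p.1} :=
      measurableSet_lt measurable_snd measurable_fst
    have heq : (Function.uncurry fun x t => (Iio x).indicator g t)
        = {p : ℝ × ℝ | p.2 < p.1}.indicator fun p => g p.2 := by
      ext p
      simp [indicator, Function.uncurry]
    rw [heq]
    exact (hg.integrable.comp_snd μ).indicator hlt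
  have hinner : ∀ᵐ x ∂μ, ∫ t in a..x, g t = ∫ t in Ioc a b, (Iio x).indicator g t := by
    filter_upwards [hμ] with x hx
    rw [intervalIntegral.integral_of_le hx.1, integral_Ioc_eq_integral_Ioo,
      integral_indicator measurableSet_Iio, Measure.restrict_restrict measurableSet_Iio]
    congr 2
    ext t
    simp only [mem_Ioo, mem_inter_iff, mem_Iio, mem_Ioc]
    grind [hx.2]
  rw [integral_congr_ae hinner, integral_integral_swap hF, intervalIntegral.integral_of_le hab]
  refine setIntegral_congr_fun measurableSet_Ioc fun t _ => ?_
  have hind : (fun x => (Iio x).indicator g t) = (Ioi t).indicator fun _ => g t := by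
    ext x
    simp [indicator]
  simp only [hind, integral_indicator_const _ measurableSet_Ioi, smul_eq_mul, mul_comm]

theorem intervalIntegral.integral_neg_self_eq_integral_add_comp_neg {f : ℝ → ℝ} {a : ℝ}
    (hf : IntervalIntegrable f volume (-a) a) :
    ∫ x in -a..a, f x = ∫ x in 0..a, (f x + f (-x)) := by
  have hzero : (0 : ℝ) ∈ uIcc (-a) a := by
    rcases le_total 0 a with h | h
    · exact mem_uIcc.2 (Or.inl ⟨by linarith, h⟩)
    · exact mem_uIcc.2 (Or.inr ⟨h, by linarith⟩)
  have hleft : IntervalIntegrable f volume (-a) 0 := hf.mono_set (uIcc_subset_uIcc_left hzero)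
  have hright : IntervalIntegrable f volume 0 a := hf.mono_set (uIcc_subset_uIcc_right hzero)
  have hneg : IntervalIntegrable (fun x => f (-x)) volume 0 a := by
    simpa using ((IntervalIntegrable.iff_comp_neg).1 hleft).symm
  rw [← integral_add_adjacent_intervals hleft hright, integral_add hright hneg,
    integral_comp_neg]
  simp [add_comm]

section Skew

variable {G : ℝ → ℝ}

theorem integral_const_sub_of_skew (hG : LocallyIntegrable G) (hskew : ∀ x, G (-x) = 1 - G x)
    (ℓ c : ℝ) : ∫ t in -ℓ..ℓ, (c - G t) = ℓ * (2 * c - 1) := by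
  have hint : IntervalIntegrable (fun t => c - G t) volume (-ℓ) ℓ :=
    intervalIntegrable_const.sub (hG.integrableOn_isCompact isCompact_uIcc).intervalIntegrable
  have hsymm : ∀ t, c - G t + (c - G (-t)) = 2 * c - 1 := fun t => by
    rw [hskew]; ring
  simp only [intervalIntegral.integral_neg_self_eq_integral_add_comp_neg hint, hsymm,
    intervalIntegral.integral_const, sub_zero, smul_eq_mul]

theorem integral_mul_const_sub_of_skew (hG : LocallyIntegrable G)
    (hskew : ∀ x, G (-x) = 1 - G x) (ℓ c : ℝ) :
    ∫ t in -ℓ..ℓ, t * (c - G t) = ℓ ^ 2 / 2 - 2 * ∫ t in 0..ℓ, t * G t := by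
  have hG' : ∀ a b, IntervalIntegrable G volume a b := fun a b =>
    (hG.integrableOn_isCompact isCompact_uIcc).intervalIntegrable
  have hint : IntervalIntegrable (fun t => t * (c - G t)) volume (-ℓ) ℓ :=
    (intervalIntegrable_const.sub (hG' _ _)).continuousOn_mul continuousOn_id
  have hsymm : ∀ t, t * (c - G t) + -t * (c - G (-t)) = t - 2 * (t * G t) := fun t => by
    rw [hskew]; ring
  rw [intervalIntegral.integral_neg_self_eq_integral_add_comp_neg hint]
  simp only [hsymm]
  rw [intervalIntegral.integral_sub intervalIntegral.intervalIntegrable_id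
      (((hG' 0 ℓ).continuousOn_mul (continuousOn_id' _)).const_mul 2),
    integral_id, intervalIntegral.integral_const_mul]
  ring

end Skew

structure IsSymmetricTruncation (G : ℝ → ℝ) (ℓ : ℝ) (μ : Measure ℝ) : Prop where
  measure_compl_Ioo : μ (Ioo (-ℓ) ℓ)ᶜ = 0
  measureReal_Iic : ∀ x ∈ Ioo (-ℓ) ℓ, μ.real (Iic x) = (G x + G ℓ - 1) / (2 * G ℓ - 1)

namespace IsSymmetricTruncation

variable {G : ℝ → ℝ} {ℓ : ℝ} {μ : Measure ℝ}

theorem ae_mem_Icc (h : IsSymmetricTruncation G ℓ μ) : ∀ᵐ x ∂μ, x ∈ Icc (-ℓ) ℓ :=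
  (ae_iff.2 h.measure_compl_Ioo).mono fun _ hx => Ioo_subset_Icc_self hx

theorem integrable_of_continuous [IsFiniteMeasure μ] (h : IsSymmetricTruncation G ℓ μ)
    {f : ℝ → ℝ} (hf : Continuous f) : Integrable f μ :=
  hf.integrable_of_ae_mem_isCompact isCompact_Icc h.ae_mem_Icc

theorem measureReal_Iic_of_mem_Icc [IsProbabilityMeasure μ] (h : IsSymmetricTruncation G ℓ μ)
    (hskew : ∀ x, G (-x) = 1 - G x) (hD : 2 * G ℓ - 1 ≠ 0) {t : ℝ} (ht : t ∈ Icc (-ℓ) ℓ) :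
    μ.real (Iic t) = (G t + G ℓ - 1) / (2 * G ℓ - 1) := by
  rcases ht.1.eq_or_lt with rfl | hlo
  · have hsub : Iic (-ℓ) ⊆ (Ioo (-ℓ) ℓ)ᶜ := fun x hx hx' => not_lt.2 hx hx'.1
    have hnull : μ (Iic (-ℓ)) = 0 := measure_mono_null hsub h.measure_compl_Ioo
    simp [measureReal_def, hnull, hskew]
  rcases ht.2.eq_or_lt with rfl | hhi
  · have hsub : (Iic t)ᶜ ⊆ (Ioo (-t) t)ᶜ := fun x hx hx' => hx hx'.2.le
    have hfull : μ (Iic t) = 1 :=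
      (prob_compl_eq_zero_iff measurableSet_Iic).1 (measure_mono_null hsub h.measure_compl_Ioo)
    rw [measureReal_def, hfull, ENNReal.toReal_one, ← two_mul, div_self hD]
  exact h.measureReal_Iic t ⟨hlo, hhi⟩

theorem integral_intervalIntegral [IsProbabilityMeasure μ] (h : IsSymmetricTruncation G ℓ μ)
    (hskew : ∀ x, G (-x) = 1 - G x) (hℓ : 0 ≤ ℓ) (hD : 2 * G ℓ - 1 ≠ 0)
    {g : ℝ → ℝ} (hg : IntegrableOn g (Ioc (-ℓ) ℓ)) :
    ∫ x, (∫ t in -ℓ..x, g t) ∂μ = (∫ t in -ℓ..ℓ, g t * (G ℓ - G t)) / (2 * G ℓ - 1) := by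
  rw [integral_intervalIntegral_eq_intervalIntegral_mul_measureReal_Ioi μ (by linarith)
      h.ae_mem_Icc hg, ← intervalIntegral.integral_div]
  refine intervalIntegral.integral_congr fun t ht => ?_
  rw [uIcc_of_le (by linarith)] at ht
  simp only [← compl_Iic, probReal_compl_eq_one_sub measurableSet_Iic,
    h.measureReal_Iic_of_mem_Icc hskew hD ht, mul_div_assoc]
  congr 1
  rw [eq_div_iff hD, sub_mul, div_mul_cancel₀ _ hD]
  ring

theorem integral_id_eq_zero [IsProbabilityMeasure μ] (h : IsSymmetricTruncation G ℓ μ)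
    (hG : LocallyIntegrable G) (hskew : ∀ x, G (-x) = 1 - G x) (hℓ : 0 ≤ ℓ)
    (hD : 2 * G ℓ - 1 ≠ 0) : ∫ x, x ∂μ = 0 := by
  have hfirst := h.integral_intervalIntegral hskew hℓ hD (g := fun _ => 1)
    continuous_const.integrableOn_Ioc
  simp only [intervalIntegral.integral_const, smul_eq_mul, mul_one, one_mul,
    sub_neg_eq_add] at hfirst
  rw [integral_const_sub_of_skew hG hskew, mul_div_cancel_right₀ _ hD,
    integral_add (h.integrable_of_continuous (f := fun x => x) continuous_id) (integrable_const ℓ),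
    integral_const, probReal_univ, one_smul] at hfirst
  linarith

theorem integral_sq [IsProbabilityMeasure μ] (h : IsSymmetricTruncation G ℓ μ)
    (hG : LocallyIntegrable G) (hskew : ∀ x, G (-x) = 1 - G x) (hℓ : 0 ≤ ℓ)
    (hD : 2 * G ℓ - 1 ≠ 0) :
    ∫ x, x ^ 2 ∂μ = ℓ ^ 2 + (ℓ ^ 2 - 4 * ∫ t in 0..ℓ, t * G t) / (2 * G ℓ - 1) := by
  have hsecond := h.integral_intervalIntegral hskew hℓ hD (g := fun t => t)
    continuous_id.integrableOn_Ioc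
  simp only [integral_id, neg_sq, integral_div] at hsecond
  rw [integral_mul_const_sub_of_skew hG hskew,
    integral_sub (h.integrable_of_continuous (continuous_pow 2)) (integrable_const _),
    integral_const, probReal_univ, one_smul] at hsecond
  field_simp at hsecond ⊢
  linarith

end IsSymmetricTruncation

/-- Variance of the symmetric truncation: `Var(X) = ℓ² H(ℓ)` with
`H(ℓ) = 1 - (2 C(ℓ) - 1)/(2 G(ℓ) - 1)` and `C(ℓ) = (2/ℓ²) ∫_0^ℓ y G(y) dy`. -/
theorem symmetric_truncation_variance
    (G : ℝ → ℝ) (hmono : Monotone G) (hskew : ∀ x, G (-x) = 1 - G x)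
    (ℓ : ℝ) (hℓ : 0 < ℓ) (hGℓ : 1 < 2 * G ℓ)
    (μ : Measure ℝ) [IsProbabilityMeasure μ]
    (hsupp : μ (Set.Ioo (-ℓ) ℓ)ᶜ = 0)
    (hcdf : ∀ x ∈ Set.Ioo (-ℓ) ℓ,
      (μ (Set.Iic x)).toReal = (G x + G ℓ - 1) / (2 * G ℓ - 1)) :
    ∫ x, (x - ∫ y, y ∂μ) ^ 2 ∂μ
      = ℓ ^ 2 *
        (1 - (2 * ((2 / ℓ ^ 2) * ∫ y in (0 : ℝ)..ℓ, y * G y) - 1) / (2 * G ℓ - 1)) := by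
  have hD : 2 * G ℓ - 1 ≠ 0 := by linarith
  have hμ : IsSymmetricTruncation G ℓ μ := ⟨hsupp, hcdf⟩
  rw [hμ.integral_id_eq_zero hmono.locallyIntegrable hskew hℓ.le hD]
  simp only [sub_zero, hμ.integral_sq hmono.locallyIntegrable hskew hℓ.le hD]
  field_simp
  ring
end

section
/- Let G be a skewing function differentiable at 0 with G'(0) finite, and let σ²(ℓ) be the variance of the symmetric truncation of G to (-ℓ, ℓ). Then σ²(ℓ)/ℓ² → 1/3 as ℓ → 0⁺. -/
/-!
Skew symmetry gives `G(0) = 1/2`; write `g = G - 1/2`. Then `2G(ℓ) - 1 = 2g(ℓ) ≈ 2G'(0) ℓ` and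
`2C(ℓ) - 1 = (4/ℓ²) ∫₀^ℓ y g(y) dy ≈ (4/3) G'(0) ℓ`, since `y g(y) ≈ G'(0) y²`; the ratio of the
two tends to `2/3`.
-/

open MeasureTheory Set Filter Topology

theorem tendsto_integral_div_pow_succ {f : ℝ → ℝ} {c : ℝ} {n : ℕ}
    (hf : ∀ᶠ ℓ in 𝓝[>] 0, IntervalIntegrable f volume 0 ℓ)
    (hlim : Tendsto (fun y => f y / y ^ n) (𝓝[>] 0) (𝓝 c)) :
    Tendsto (fun ℓ => (∫ y in 0..ℓ, f y) / ℓ ^ (n + 1)) (𝓝[>] 0) (𝓝 (c / (n + 1))) := by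
  rw [Metric.tendsto_nhds]
  intro ε hε
  obtain ⟨δ, hδ, hclose⟩ :=
    mem_nhdsGT_iff_exists_Ioo_subset.1 (Metric.tendsto_nhds.1 hlim (ε / 2) (half_pos hε))
  filter_upwards [hf, Ioo_mem_nhdsGT hδ] with ℓ hfℓ hℓ
  have hpow : ∀ a : ℝ, IntervalIntegrable (fun y => a * y ^ n) volume 0 ℓ :=
    fun a => (continuous_const.mul (continuous_pow n)).intervalIntegrable 0 ℓ
  have hintegral_pow : ∀ a : ℝ, ∫ y in 0..ℓ, a * y ^ n = a * (ℓ ^ (n + 1) / (n + 1)) := by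
    intro a
    simp [integral_pow]
  have hpointwise : ∀ y ∈ Ioc 0 ℓ, ‖f y - c * y ^ n‖ ≤ ε / 2 * y ^ n := by
    intro y ⟨hy₀, hyℓ⟩
    have hyn : 0 < y ^ n := pow_pos hy₀ n
    have hdist : |f y / y ^ n - c| < ε / 2 := hclose ⟨hy₀, hyℓ.trans_lt hℓ.2⟩
    have hsplit : f y - c * y ^ n = (f y / y ^ n - c) * y ^ n := by field_simp
    rw [Real.norm_eq_abs, hsplit, abs_mul, abs_of_pos hyn]
    exact mul_le_mul_of_nonneg_right hdist.le hyn.le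
  have herror : |(∫ y in 0..ℓ, f y) - c * (ℓ ^ (n + 1) / (n + 1))|
      ≤ ε / 2 * (ℓ ^ (n + 1) / (n + 1)) := by
    rw [← hintegral_pow, ← hintegral_pow, ← intervalIntegral.integral_sub hfℓ (hpow c)]
    exact intervalIntegral.norm_integral_le_of_norm_le hℓ.1.le
      (ae_of_all _ hpointwise) (hpow _)
  have hℓpow : 0 < ℓ ^ (n + 1) := pow_pos hℓ.1 _
  rw [Real.dist_eq]
  calc |(∫ y in 0..ℓ, f y) / ℓ ^ (n + 1) - c / (n + 1)|
      = |(∫ y in 0..ℓ, f y) - c * (ℓ ^ (n + 1) / (n + 1))| / ℓ ^ (n + 1) := by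
        rw [← abs_of_pos hℓpow, ← abs_div, abs_of_pos hℓpow]
        congr 1
        field_simp
    _ ≤ ε / 2 * (ℓ ^ (n + 1) / (n + 1)) / ℓ ^ (n + 1) := by gcongr
    _ = ε / 2 / (n + 1) := by field_simp
    _ < ε := by
        rw [div_lt_iff₀ (by positivity)]
        nlinarith [(Nat.cast_nonneg n : (0 : ℝ) ≤ n)]

theorem HasDerivAt.tendsto_sub_div_nhdsGT {G : ℝ → ℝ} {d : ℝ} (h : HasDerivAt G d 0) :
    Tendsto (fun ℓ => (G ℓ - G 0) / ℓ) (𝓝[>] 0) (𝓝 d) := by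
  simpa [div_eq_inv_mul] using h.tendsto_slope_zero_right

theorem HasDerivAt.tendsto_integral_mul_sub_div_cube {G : ℝ → ℝ} {d : ℝ} (h : HasDerivAt G d 0)
    (hint : ∀ᶠ ℓ in 𝓝[>] 0, IntervalIntegrable G volume 0 ℓ) :
    Tendsto (fun ℓ => (∫ y in 0..ℓ, y * (G y - G 0)) / ℓ ^ 3) (𝓝[>] 0) (𝓝 (d / 3)) := by
  have hmoment := tendsto_integral_div_pow_succ (n := 2) (c := d)
    (f := fun y => y * (G y - G 0))
    (hint.mono fun ℓ hℓ => (hℓ.sub intervalIntegrable_const).continuousOn_mul continuousOn_id)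
    (h.tendsto_sub_div_nhdsGT.congr' (eventually_nhdsWithin_of_forall fun y hy => by
      field_simp [(ne_of_gt hy : y ≠ 0)]))
  norm_num at hmoment
  exact hmoment

theorem variance_ratio_eq {G : ℝ → ℝ} {ℓ : ℝ} (hG0 : G 0 = 1 / 2)
    (hint : IntervalIntegrable G volume 0 ℓ) (hℓ : ℓ ≠ 0) :
    1 - (2 * ((2 / ℓ ^ 2) * ∫ y in 0..ℓ, y * G y) - 1) / (2 * G ℓ - 1)
      = 1 - 4 * ((∫ y in 0..ℓ, y * (G y - G 0)) / ℓ ^ 3) / (2 * ((G ℓ - G 0) / ℓ)) := by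
  have hsplit : ∫ y in 0..ℓ, y * G y = (∫ y in 0..ℓ, y * (G y - G 0)) + G 0 * (ℓ ^ 2 / 2) := by
    have hmul : IntervalIntegrable (fun y => y * G y) volume 0 ℓ :=
      hint.continuousOn_mul continuousOn_id
    simp only [mul_sub]
    rw [intervalIntegral.integral_sub hmul ((continuous_mul_const (G 0)).intervalIntegrable _ _),
      intervalIntegral.integral_mul_const, integral_id]
    ring
  have hnum : 2 * ((2 / ℓ ^ 2) * ∫ y in 0..ℓ, y * G y) - 1
      = 4 * ((∫ y in 0..ℓ, y * (G y - G 0)) / ℓ ^ 3) * ℓ := by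
    rw [hsplit, hG0]
    field_simp
    ring
  have hden : 2 * G ℓ - 1 = 2 * ((G ℓ - G 0) / ℓ) * ℓ := by
    rw [hG0]
    field_simp
  rw [hnum, hden, mul_div_mul_right _ _ hℓ]

/-- For a skewing function `G` differentiable at `0`, the variance
`σ²(ℓ) = ℓ² [1 - (2C(ℓ)-1)/(2G(ℓ)-1)]` of the symmetric truncation satisfies
`σ²(ℓ)/ℓ² → 1/3` as `ℓ → 0⁺`. -/
theorem variance_ratio_tendsto_third
    (G : ℝ → ℝ) (hmono : Monotone G) (hskew : ∀ x, G (-x) = 1 - G x)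
    (d : ℝ) (hderiv : HasDerivAt G d 0) (hd : 0 < d) :
    Tendsto
      (fun ℓ : ℝ =>
        1 - (2 * ((2 / ℓ ^ 2) * ∫ y in (0 : ℝ)..ℓ, y * G y) - 1) / (2 * G ℓ - 1))
      (nhdsWithin 0 (Set.Ioi 0)) (nhds (1 / 3)) := by
  have hG0 : G 0 = 1 / 2 := by
    have h := hskew 0
    rw [neg_zero] at h
    linarith
  have hint : ∀ ℓ, IntervalIntegrable G volume 0 ℓ := fun ℓ => hmono.intervalIntegrable
  have hlim := (tendsto_const_nhds (x := (1 : ℝ))).sub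
    (((tendsto_const_nhds (x := (4 : ℝ))).mul
      (hderiv.tendsto_integral_mul_sub_div_cube (.of_forall hint))).div
      ((tendsto_const_nhds (x := (2 : ℝ))).mul hderiv.tendsto_sub_div_nhdsGT) (by positivity))
  have hvalue : 1 - 4 * (d / 3) / (2 * d) = 1 / 3 := by
    field_simp
    ring
  rw [hvalue] at hlim
  refine hlim.congr' ?_
  filter_upwards [self_mem_nhdsWithin] with ℓ hℓ
  exact (variance_ratio_eq hG0 (hint ℓ) (ne_of_gt hℓ)).symm
end
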